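/- arXiv:1207.0749 — 2 statements merged into one kernel-verified Lean document; each statement's English description precedes it below -/
import Mathlib

section
/- Let E be a complex Banach space, p ∈ (1,∞), T > 0, and let B be the derivative operator on L^p(0,T;E) with domain { f ∈ W^{1,p}(0,T;E) : f(0) = 0 }, so that ((B+λ)⁻¹g)(t) = ∫_0^t e^{λ(x−t)} g(x) dx. Then for every k ∈ ℝ and every g ∈ L^p(0,T;E), ‖(B+λ)⁻¹ g‖_{L^p(0,T;E)} → 0 as |λ| → ∞ with Re(λ) ≥ k. -/
/-!
For `h` of class `C¹`, integrating by parts gives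
`λ • (B+λ)⁻¹ h (t) = h t - e^{-λt} h 0 - (B+λ)⁻¹ h' (t)`, so `(B+λ)⁻¹ h = O(1/|λ|)` uniformly
in `t`. Since `Re λ ≥ k`, the kernel `e^{λ(x-t)}` is bounded by `e^{|k|T}` for `0 ≤ x ≤ t ≤ T`,
so `(B+λ)⁻¹` maps `L¹(0,T)` to `L^∞(0,T)` with norm bounded uniformly in `λ`. Approximating
`g` in `L¹(0,T)` by a smooth function therefore makes `(B+λ)⁻¹ g` uniformly small for large
`|λ|`, and a uniform bound on `(0,T)` bounds the `L^p` norm.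
-/

open Complex MeasureTheory Set Filter
open scoped ENNReal NNReal

noncomputable section

variable {E : Type*} [NormedAddCommGroup E] [NormedSpace ℂ E] [CompleteSpace E]

/-- `((B+λ)⁻¹ g)(t) = ∫_0^t e^{λ(x-t)} g(x) dx`, the resolvent of the first derivative
`B = ∂_t` on `L^p(0,T;E)` with domain `{f ∈ W^{1,p}(0,T;E) : f(0) = 0}`. -/
def resD (lam : ℂ) (g : ℝ → E) (t : ℝ) : E :=
  ∫ x in (0 : ℝ)..t, Complex.exp (lam * ((x : ℂ) - (t : ℂ))) • g x

/-- `f ∈ W^{1,p}(0,T;E)` with (distributional) derivative `f'`: both belong to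
`L^p(0,T;E)` and `f` is the primitive of `f'` (absolutely continuous representative). -/
def MemW1p (p : ℝ≥0∞) (T : ℝ) (f f' : ℝ → E) : Prop :=
  MemLp f p (volume.restrict (Ioo 0 T)) ∧
  MemLp f' p (volume.restrict (Ioo 0 T)) ∧
  ∀ t ∈ Icc (0 : ℝ) T, f t = f 0 + ∫ s in (0 : ℝ)..t, f' s

/-- The bound `(1 - e^{-Re(λ)T})/Re(λ)`, interpreted as `T` when `Re(λ) = 0`. -/
def resBound (r T : ℝ) : ℝ :=
  if r = 0 then T else (1 - Real.exp (-r * T)) / r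

open scoped ContDiff

theorem MeasureTheory.Integrable.exists_contDiff_integral_norm_sub_le
    {V F : Type*} [NormedAddCommGroup V] [NormedSpace ℝ V] [FiniteDimensional ℝ V]
    [MeasurableSpace V] [BorelSpace V] [NormedAddCommGroup F] [NormedSpace ℝ F]
    {μ : Measure V} [IsFiniteMeasureOnCompacts μ] {g : V → F} (hg : Integrable g μ)
    {δ : ℝ} (hδ : 0 < δ) :
    ∃ h : V → F, ContDiff ℝ ∞ h ∧ Integrable (g - h) μ ∧ ∫ x, ‖g x - h x‖ ∂μ ≤ δ := by
  obtain ⟨h, -, hh, hgh⟩ :=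
    (memLp_one_iff_integrable.2 hg).exist_eLpNorm_sub_le ENNReal.one_ne_top le_rfl hδ
  have hgh_meas : AEStronglyMeasurable (g - h) μ :=
    hg.aestronglyMeasurable.sub hh.continuous.aestronglyMeasurable
  refine ⟨h, hh, memLp_one_iff_integrable.1 ⟨hgh_meas, hgh.trans_lt ENNReal.ofReal_lt_top⟩, ?_⟩
  change ∫ x, ‖(g - h) x‖ ∂μ ≤ δ
  rw [integral_norm_eq_lintegral_enorm hgh_meas, ← eLpNorm_one_eq_lintegral_enorm]
  exact ENNReal.toReal_le_of_le_ofReal hδ.le hgh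

section

variable {F : Type*} [NormedAddCommGroup F] [NormedSpace ℂ F]

theorem norm_cexp_mul_sub_le {k T : ℝ} {lam : ℂ} (hk : k ≤ lam.re) {x t : ℝ}
    (hxt : x ≤ t) (htx : t - x ≤ T) :
    ‖cexp (lam * ((x : ℂ) - t))‖ ≤ Real.exp (|k| * T) := by
  rw [Complex.norm_exp, Real.exp_le_exp, ← ofReal_sub, re_mul_ofReal]
  calc lam.re * (x - t) ≤ k * (x - t) := mul_le_mul_of_nonpos_right hk (by linarith)
    _ = -k * (t - x) := by ring
    _ ≤ |k| * T := mul_le_mul (neg_le_abs k) htx (by linarith) (abs_nonneg k)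

theorem IntervalIntegrable.cexp_mul_sub_smul {f : ℝ → F} {t : ℝ}
    (hf : IntervalIntegrable f volume 0 t) (lam : ℂ) :
    IntervalIntegrable (fun x : ℝ => cexp (lam * ((x : ℂ) - t)) • f x) volume 0 t :=
  hf.continuousOn_smul (by fun_prop)

theorem resD_add {f g : ℝ → F} {t : ℝ} (hf : IntervalIntegrable f volume 0 t)
    (hg : IntervalIntegrable g volume 0 t) (lam : ℂ) :
    resD lam (f + g) t = resD lam f t + resD lam g t := by
  simp only [resD, Pi.add_apply, smul_add]
  exact intervalIntegral.integral_add (hf.cexp_mul_sub_smul lam) (hg.cexp_mul_sub_smul lam)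

theorem norm_resD_le {k T : ℝ} {lam : ℂ} (hk : k ≤ lam.re) {f : ℝ → F}
    (hf : IntegrableOn f (Ioo 0 T)) {t : ℝ} (ht : t ∈ Ioo 0 T) :
    ‖resD lam f t‖ ≤ Real.exp (|k| * T) * ∫ x in Ioo 0 T, ‖f x‖ := by
  have hsub : Ioc 0 t ⊆ Ioo 0 T := Ioc_subset_Ioo_right ht.2
  rw [resD, intervalIntegral.integral_of_le ht.1.le, ← integral_const_mul]
  calc ‖∫ x in Ioc 0 t, cexp (lam * ((x : ℂ) - t)) • f x‖
      ≤ ∫ x in Ioc 0 t, Real.exp (|k| * T) * ‖f x‖ := by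
        refine norm_integral_le_of_norm_le ((hf.mono_set hsub).norm.const_mul _) ?_
        refine (ae_restrict_iff' measurableSet_Ioc).2 (ae_of_all _ fun x hx => ?_)
        rw [norm_smul]
        gcongr
        exact norm_cexp_mul_sub_le hk hx.2 (by linarith [hx.1, ht.2])
    _ ≤ ∫ x in Ioo 0 T, Real.exp (|k| * T) * ‖f x‖ :=
        setIntegral_mono_set (hf.norm.const_mul _) (ae_of_all _ fun _ => by positivity)
          hsub.eventuallyLE

theorem hasDerivAt_cexp_mul_sub (lam : ℂ) (t x : ℝ) :
    HasDerivAt (fun x : ℝ => cexp (lam * ((x : ℂ) - t)))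
      (cexp (lam * ((x : ℂ) - t)) * lam) x := by
  simpa using (((hasDerivAt_id x).ofReal_comp.sub_const (t : ℂ)).const_mul lam).cexp

theorem resD_deriv_eq [CompleteSpace F] (lam : ℂ) {h : ℝ → F} (hh : ContDiff ℝ 1 h) (t : ℝ) :
    resD lam (deriv h) t = h t - cexp (-(lam * t)) • h 0 - lam • resD lam h t := by
  have hker := hasDerivAt_cexp_mul_sub lam t
  rw [resD, resD, intervalIntegral.integral_smul_deriv_eq_deriv_smul
    (fun x _ => hker x) (fun x _ => (hh.differentiable one_ne_zero x).hasDerivAt)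
    (Continuous.intervalIntegrable (by fun_prop) _ _)
    ((hh.continuous_deriv le_rfl).intervalIntegrable _ _), ← intervalIntegral.integral_smul]
  simp [mul_comm _ lam, mul_smul]

theorem exists_norm_mul_norm_resD_le_of_contDiff [CompleteSpace F] {h : ℝ → F}
    (hh : ContDiff ℝ 1 h) (k T : ℝ) :
    ∃ D, ∀ lam : ℂ, k ≤ lam.re → ∀ t ∈ Ioo 0 T, ‖lam‖ * ‖resD lam h t‖ ≤ D := by
  obtain ⟨C, hC⟩ := (isCompact_Icc (a := 0) (b := T)).exists_bound_of_continuousOn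
    hh.continuous.continuousOn
  have hh' : IntegrableOn (deriv h) (Ioo 0 T) :=
    (hh.continuous_deriv le_rfl).integrableOn_Icc.mono_set Ioo_subset_Icc_self
  set K := Real.exp (|k| * T)
  refine ⟨C + K * C + K * ∫ x in Ioo 0 T, ‖deriv h x‖, fun lam hk t ht => ?_⟩
  have hK : ‖cexp (-(lam * t))‖ ≤ K := by
    simpa using norm_cexp_mul_sub_le hk (x := 0) ht.1.le (by simpa using ht.2.le)
  calc ‖lam‖ * ‖resD lam h t‖
      = ‖h t - cexp (-(lam * t)) • h 0 - resD lam (deriv h) t‖ := by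
        rw [← norm_smul, resD_deriv_eq lam hh]; abel_nf
    _ ≤ ‖h t‖ + ‖cexp (-(lam * t))‖ * ‖h 0‖ + ‖resD lam (deriv h) t‖ := by
        grw [norm_sub_le, norm_sub_le, norm_smul]
    _ ≤ C + K * C + K * ∫ x in Ioo 0 T, ‖deriv h x‖ := by
        gcongr
        · exact hC t (Ioo_subset_Icc_self ht)
        · exact hC 0 (left_mem_Icc.2 (ht.1.trans ht.2).le)
        · exact norm_resD_le hk hh' ht

theorem exists_forall_norm_resD_le [CompleteSpace F] (k : ℝ) {T : ℝ} {g : ℝ → F}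
    (hg : IntegrableOn g (Ioo 0 T)) {η : ℝ} (hη : 0 < η) :
    ∃ M, ∀ lam : ℂ, k ≤ lam.re → M ≤ ‖lam‖ → ∀ t ∈ Ioo 0 T, ‖resD lam g t‖ ≤ η := by
  set K := Real.exp (|k| * T)
  have hK : 0 < K := Real.exp_pos _
  obtain ⟨h, hh, hgh, hgh_small⟩ :=
    Integrable.exists_contDiff_integral_norm_sub_le hg (δ := η / (2 * K)) (by positivity)
  obtain ⟨D, hD⟩ := exists_norm_mul_norm_resD_le_of_contDiff (hh.of_le ENat.LEInfty.out) k T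
  refine ⟨max 1 (2 * D / η), fun lam hk hM t ht => ?_⟩
  have hlam : 0 < ‖lam‖ := one_pos.trans_le ((le_max_left _ _).trans hM)
  have hremainder : ‖resD lam (g - h) t‖ ≤ η / 2 :=
    calc ‖resD lam (g - h) t‖ ≤ K * ∫ x in Ioo 0 T, ‖g x - h x‖ := norm_resD_le hk hgh ht
      _ ≤ K * (η / (2 * K)) := by gcongr
      _ = η / 2 := by field_simp
  have hsmooth : ‖resD lam h t‖ ≤ η / 2 := by
    have h2D : 2 * D ≤ η * ‖lam‖ := (div_le_iff₀' hη).1 ((le_max_right _ _).trans hM)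
    nlinarith [hD lam hk t ht]
  have hsplit : resD lam g t = resD lam (g - h) t + resD lam h t := by
    rw [← resD_add _ (hh.continuous.intervalIntegrable _ _), sub_add_cancel]
    exact (intervalIntegrable_iff_integrableOn_Ioc_of_le ht.1.le).2
      (IntegrableOn.mono_set hgh (Ioc_subset_Ioo_right ht.2))
  rw [hsplit]
  linarith [norm_add_le (resD lam (g - h) t) (resD lam h t)]

end

theorem derivative_resolvent_decay_general
    {E : Type*} [NormedAddCommGroup E] [NormedSpace ℂ E] [CompleteSpace E]
    (p : ℝ≥0∞) (hp : 1 < p) (T : ℝ) (hT : 0 < T)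
    (k : ℝ) (g : ℝ → E) (hg : MemLp g p (volume.restrict (Ioo 0 T))) :
    ∀ ε > (0 : ℝ), ∃ M : ℝ, ∀ lam : ℂ, k ≤ lam.re → M ≤ ‖lam‖ →
      eLpNorm (resD lam g) p (volume.restrict (Ioo 0 T)) ≤ ENNReal.ofReal ε := by
  intro ε hε
  have hg₁ : IntegrableOn g (Ioo 0 T) := memLp_one_iff_integrable.1 (hg.mono_exponent hp.le)
  have hc : 0 < T ^ p.toReal⁻¹ := Real.rpow_pos_of_pos hT _
  obtain ⟨M, hM⟩ := exists_forall_norm_resD_le k hg₁ (div_pos hε hc)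
  refine ⟨M, fun lam hk hlam => ?_⟩
  calc eLpNorm (resD lam g) p (volume.restrict (Ioo 0 T))
      ≤ volume.restrict (Ioo 0 T) univ ^ p.toReal⁻¹ * ENNReal.ofReal (ε / T ^ p.toReal⁻¹) :=
        eLpNorm_le_of_ae_bound ((ae_restrict_iff' measurableSet_Ioo).2
          (ae_of_all _ (hM lam hk hlam)))
    _ = ENNReal.ofReal ε := by
        rw [Measure.restrict_apply_univ, Real.volume_Ioo, sub_zero, ENNReal.ofReal_rpow_of_pos hT,
          ← ENNReal.ofReal_mul hc.le, mul_div_cancel₀ _ hc.ne']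

/-- **Riemann–Lebesgue type decay of the resolvent of `∂_t` (eq. (6) of the paper).**
For every `k ∈ ℝ` and every `g ∈ L^p(0,T;E)`:
`‖(B+λ)⁻¹ g‖_{L^p(0,T;E)} → 0` as `|λ| → ∞` with `Re(λ) ≥ k`. -/
theorem derivative_resolvent_decay
    {E : Type*} [NormedAddCommGroup E] [NormedSpace ℂ E] [CompleteSpace E]
    (p : ℝ≥0∞) (hp : 1 < p) (hp' : p ≠ ⊤) (T : ℝ) (hT : 0 < T)
    (k : ℝ) (g : ℝ → E) (hg : MemLp g p (volume.restrict (Ioo 0 T))) :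
    ∀ ε > (0 : ℝ), ∃ M : ℝ, ∀ lam : ℂ, k ≤ lam.re → M ≤ ‖lam‖ →
      eLpNorm (resD lam g) p (volume.restrict (Ioo 0 T)) ≤ ENNReal.ofReal ε :=
  derivative_resolvent_decay_general p hp T hT k g hg

end
end

section
/- Let E be a complex Banach space, c > 0, and A ∈ 𝒬(c²). Then for every z ∈ ℂ with Re(z) ≤ −c both operators ±i√A + z are boundedly invertible, with (±i√A + z)⁻¹ = z(A+z²)⁻¹ ∓ i√A(A+z²)⁻¹ and (±i√A + z)⁻¹ A^{−1/2} = z(A+z²)⁻¹A^{−1/2} ∓ i(A+z²)⁻¹; moreover ‖(±i√A + z)⁻¹A^{−1/2}‖ = o(1) as |z| → ∞ in the half-plane { z ∈ ℂ : Re(z) ≤ −c }. -/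
open Complex MeasureTheory Set Filter
open scoped ENNReal NNReal

noncomputable section

variable {E : Type*} [NormedAddCommGroup E] [NormedSpace ℂ E]

/-- `R ∈ ℒ(E)` is a (two-sided) bounded inverse of `A + lam`,
i.e. `lam` belongs to the resolvent set `ρ(-A)` with resolvent `R`. -/
structure IsResolventAt (A : E →ₗ.[ℂ] E) (lam : ℂ) (R : E →L[ℂ] E) : Prop where
  mem : ∀ y, R y ∈ A.domain
  right_inv : ∀ y, A ⟨R y, mem y⟩ + lam • R y = y
  left_inv : ∀ x : A.domain, R (A x + lam • (x : E)) = x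

/-- The sector `S_θ = {z : |arg z| ≤ θ} ∪ {0}`; for `θ = 0` this is `[0,∞)`. -/
def Sector (θ : ℝ) : Set ℂ := {z : ℂ | |z.arg| ≤ θ}

/-- The parabolic region `Π_c = { z : Re(z) ≥ c - (Im z)²/(4c) }`. -/
def ParabolicRegion (c : ℝ) : Set ℂ :=
  {z : ℂ | c - z.im ^ 2 / (4 * c) ≤ z.re}

/-- `A ∈ 𝒬(c)` (Definition 4.1), with resolvent family `R` and with
`Ainvsqrt` playing the role of the bounded operator `A^{-1/2}`:
`A ∈ 𝒫(0)`, `Π_c ⊆ ρ(-A)`, and `‖(A+z)⁻¹‖ = o(1)`,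
`|z|^{1/2} ‖(A+z)⁻¹ A^{-1/2}‖ = o(1)` in `Π_c`. -/
structure IsQClass (A : E →ₗ.[ℂ] E) (c : ℝ) (R : ℂ → E →L[ℂ] E)
    (Ainvsqrt : E →L[ℂ] E) : Prop where
  closed : A.IsClosed
  sectorial0 : ∃ K ≥ (1 : ℝ), ∀ z ∈ Sector 0,
    IsResolventAt A z (R z) ∧ (1 + ‖z‖) * ‖R z‖ ≤ K
  para : ∀ z ∈ ParabolicRegion c, IsResolventAt A z (R z)
  res_decay : ∀ ε > (0 : ℝ), ∃ M : ℝ, ∀ z ∈ ParabolicRegion c, M ≤ ‖z‖ → ‖R z‖ ≤ ε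
  sqrt_res_decay : ∀ ε > (0 : ℝ), ∃ M : ℝ, ∀ z ∈ ParabolicRegion c, M ≤ ‖z‖ →
    ‖z‖ ^ ((1 : ℝ) / 2) * ‖(R z).comp Ainvsqrt‖ ≤ ε

/-- The map `z ↦ z²` sends the half-plane `{Re(z) ≤ -c}` into `Π_{c²}`. -/
lemma SqrtRes.mem_parab_sq {c : ℝ} (hc : 0 < c) {z : ℂ} (hz : z.re ≤ -c) :
    z ^ 2 ∈ ParabolicRegion (c ^ 2) := by
  have hx2 : c ^ 2 ≤ z.re ^ 2 := by nlinarith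
  have hc2 : (0:ℝ) < c ^ 2 := by positivity
  have hre : (z ^ 2).re = z.re ^ 2 - z.im ^ 2 := by
    simp [pow_two, Complex.mul_re]
  have him : (z ^ 2).im = 2 * z.re * z.im := by
    simp [pow_two, Complex.mul_im]; ring
  show c ^ 2 - (z ^ 2).im ^ 2 / (4 * c ^ 2) ≤ (z ^ 2).re
  rw [hre, him, sub_le_iff_le_add, ← sub_nonneg]
  have key : z.re ^ 2 - z.im ^ 2 + (2 * z.re * z.im) ^ 2 / (4 * c ^ 2) - c ^ 2
      = (z.re ^ 2 - c ^ 2) * (c ^ 2 + z.im ^ 2) / c ^ 2 := by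
    field_simp; ring
  rw [key]
  exact div_nonneg (mul_nonneg (by linarith) (by positivity)) (by positivity)

/-- `√A ∘ A^{-1/2} = id`. -/
lemma SqrtRes.sqrtA_apply_Ainvsqrt {sqrtA : E →ₗ.[ℂ] E} {Ainvsqrt : E →L[ℂ] E}
    (hsqrtA : IsResolventAt sqrtA 0 Ainvsqrt) (v : E) :
    sqrtA ⟨Ainvsqrt v, hsqrtA.mem v⟩ = v := by
  have := hsqrtA.right_inv v
  simpa using this

/-- The range of `(A+lam)⁻¹` lies in the domain of `√A`, with
`√A (A+lam)⁻¹ y = A^{-1/2}(y - lam (A+lam)⁻¹ y)`. -/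
lemma SqrtRes.key_inv {A sqrtA : E →ₗ.[ℂ] E} {RQ : E →L[ℂ] E} {Ainvsqrt : E →L[ℂ] E}
    {lam : ℂ}
    (hRA : IsResolventAt A lam RQ)
    (hAinv : IsResolventAt A 0 (Ainvsqrt.comp Ainvsqrt))
    (hsqrtA : IsResolventAt sqrtA 0 Ainvsqrt)
    (y : E) :
    ∃ h : RQ y ∈ sqrtA.domain,
      sqrtA ⟨RQ y, h⟩ = Ainvsqrt (y - lam • RQ y) := by
  have hu : RQ y ∈ A.domain := hRA.mem y
  have hA : A ⟨RQ y, hu⟩ = y - lam • RQ y :=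
    eq_sub_of_add_eq (hRA.right_inv y)
  have h1 : Ainvsqrt (Ainvsqrt (A ⟨RQ y, hu⟩)) = RQ y := by
    have := hAinv.left_inv ⟨RQ y, hu⟩
    simpa using this
  have h1' : RQ y = Ainvsqrt (Ainvsqrt (y - lam • RQ y)) := by
    rw [← hA, h1]
  refine ⟨h1' ▸ hsqrtA.mem _, ?_⟩
  have e : (⟨RQ y, h1' ▸ hsqrtA.mem _⟩ : sqrtA.domain)
      = ⟨Ainvsqrt (Ainvsqrt (y - lam • RQ y)), hsqrtA.mem _⟩ := Subtype.ext h1'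
  rw [e, SqrtRes.sqrtA_apply_Ainvsqrt hsqrtA]

/-- The bounded operator `z (A+z²)⁻¹ - σ (A^{-1/2} - z² A^{-1/2}(A+z²)⁻¹)` is a two-sided
inverse of `σ √A + z`, whenever `σ² = -1` and `z ≠ 0` with `z² ∈ ρ(-A)`. -/
lemma SqrtRes.aux_resolvent {A sqrtA : E →ₗ.[ℂ] E} {RQ : E →L[ℂ] E} {Ainvsqrt : E →L[ℂ] E}
    (σ z : ℂ) (hσ : σ * σ = -1) (hz : z ≠ 0)
    (hRA : IsResolventAt A (z ^ 2) RQ)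
    (hAinv : IsResolventAt A 0 (Ainvsqrt.comp Ainvsqrt))
    (hsqrtA : IsResolventAt sqrtA 0 Ainvsqrt) :
    IsResolventAt (σ • sqrtA) z
      (z • RQ - σ • (Ainvsqrt - (z ^ 2) • Ainvsqrt.comp RQ)) := by
  set B : E →L[ℂ] E := Ainvsqrt - (z ^ 2) • Ainvsqrt.comp RQ with hB
  have hBapp : ∀ y, B y = Ainvsqrt (y - z ^ 2 • RQ y) := by
    intro y; simp [hB, map_sub, _root_.map_smul, sub_eq_add_neg]
  have hBmem : ∀ y, B y ∈ sqrtA.domain := fun y => (hBapp y) ▸ hsqrtA.mem _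
  have hSB : ∀ y, sqrtA ⟨B y, hBmem y⟩ = y - z ^ 2 • RQ y := by
    intro y
    have e : (⟨B y, hBmem y⟩ : sqrtA.domain)
        = ⟨Ainvsqrt (y - z ^ 2 • RQ y), hsqrtA.mem _⟩ := Subtype.ext (hBapp y)
    rw [e, SqrtRes.sqrtA_apply_Ainvsqrt hsqrtA]
  have hRapp : ∀ y, (z • RQ - σ • B) y = z • RQ y - σ • B y := by
    intro y; simp
  have hmemQ : ∀ y, RQ y ∈ sqrtA.domain := fun y => (SqrtRes.key_inv hRA hAinv hsqrtA y).1
  have hmem : ∀ y, (z • RQ - σ • B) y ∈ (σ • sqrtA).domain := by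
    intro y
    show (z • RQ - σ • B) y ∈ sqrtA.domain
    rw [hRapp]
    exact Submodule.sub_mem _ (Submodule.smul_mem _ _ (hmemQ y))
      (Submodule.smul_mem _ _ (hBmem y))
  have hSQ : ∀ y, sqrtA ⟨RQ y, hmemQ y⟩ = B y := by
    intro y
    obtain ⟨h, hval⟩ := SqrtRes.key_inv hRA hAinv hsqrtA y
    rw [show (⟨RQ y, hmemQ y⟩ : sqrtA.domain) = ⟨RQ y, h⟩ from rfl, hval, ← hBapp]
  have hSR : ∀ y (hm : (z • RQ - σ • B) y ∈ sqrtA.domain),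
      sqrtA ⟨(z • RQ - σ • B) y, hm⟩ = z • B y - σ • (y - z ^ 2 • RQ y) := by
    intro y hm
    have e : (⟨(z • RQ - σ • B) y, hm⟩ : sqrtA.domain)
        = z • ⟨RQ y, hmemQ y⟩ - σ • ⟨B y, hBmem y⟩ := Subtype.ext (by
          push_cast [hRapp]
          rfl)
    rw [e, LinearPMap.map_sub, LinearPMap.map_smul, LinearPMap.map_smul, hSQ, hSB]
  have hri : ∀ y, (σ • sqrtA) ⟨(z • RQ - σ • B) y, hmem y⟩ + z • (z • RQ - σ • B) y = y := by
    intro y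
    have hid : σ • (z • B y - σ • (y - z ^ 2 • RQ y)) + z • (z • RQ y - σ • B y)
        = (σ * σ) • (z ^ 2 • RQ y - y) + z ^ 2 • RQ y
          + ((σ * z) • B y - (z * σ) • B y) := by
      module
    rw [LinearPMap.smul_apply, hSR y (hmem y), hRapp, hid, hσ]
    module
  refine ⟨hmem, hri, ?_⟩
  intro x
  set y := (σ • sqrtA) x + z • (x : E) with hy
  set v := (z • RQ - σ • B) y - (x : E) with hv
  have hvmem : v ∈ sqrtA.domain := Submodule.sub_mem _ (hmem y) x.2
  have hSv : σ • sqrtA ⟨v, hvmem⟩ + z • v = 0 := by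
    have e : (⟨v, hvmem⟩ : sqrtA.domain)
        = ⟨(z • RQ - σ • B) y, hmem y⟩ - ⟨(x : E), x.2⟩ := Subtype.ext rfl
    have h1 := hri y
    rw [LinearPMap.smul_apply] at h1
    have hy' : y = σ • sqrtA ⟨(x : E), x.2⟩ + z • (x : E) := rfl
    rw [e, LinearPMap.map_sub, hv]
    linear_combination (norm := module) h1 + hy'
  have hσz : σ * z ≠ 0 := by
    intro h
    rcases mul_eq_zero.1 h with h | h
    · rw [h] at hσ; simp at hσ
    · exact hz h
  have hSv' : sqrtA ⟨v, hvmem⟩ = (σ * z) • v := by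
    have h1 : σ • sqrtA ⟨v, hvmem⟩ = -(z • v) :=
      eq_neg_of_add_eq_zero_left hSv
    have h2 := congrArg (σ • ·) h1
    simp only [smul_smul, hσ, neg_smul, one_smul, smul_neg] at h2
    exact neg_injective h2
  have hAv : Ainvsqrt (sqrtA ⟨v, hvmem⟩) = v := by
    have := hsqrtA.left_inv ⟨v, hvmem⟩
    simpa using this
  have hAv1 : (σ * z) • Ainvsqrt v = v := by
    have := _root_.map_smul Ainvsqrt (σ * z) v
    rw [← this, ← hSv', hAv]
  have hAv2 : Ainvsqrt v = (σ * z)⁻¹ • v := by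
    conv_lhs => rw [← inv_smul_smul₀ hσz (Ainvsqrt v), hAv1]
  have hAAv : (Ainvsqrt.comp Ainvsqrt) v = (-(z ^ 2))⁻¹ • v := by
    have h3 : Ainvsqrt (Ainvsqrt v) = (σ * z)⁻¹ • ((σ * z)⁻¹ • v) := by
      rw [hAv2, _root_.map_smul, hAv2]
    rw [ContinuousLinearMap.comp_apply, h3, smul_smul, ← mul_inv]
    congr 2
    linear_combination z ^ 2 * hσ
  have hz2 : (-(z ^ 2)) ≠ 0 := by
    simpa using pow_ne_zero 2 hz
  have hveq : v = (-(z ^ 2)) • (Ainvsqrt.comp Ainvsqrt) v := by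
    rw [hAAv, smul_smul, mul_inv_cancel₀ hz2, one_smul]
  have hAW : A ⟨(Ainvsqrt.comp Ainvsqrt) v, hAinv.mem v⟩ = v := by
    have := hAinv.right_inv v
    simpa using this
  have hzero : A ⟨(Ainvsqrt.comp Ainvsqrt) v, hAinv.mem v⟩
      + z ^ 2 • ((Ainvsqrt.comp Ainvsqrt) v) = 0 := by
    rw [hAW]
    nth_rewrite 1 [hveq]
    simp
  have hW0 : (Ainvsqrt.comp Ainvsqrt) v = 0 := by
    have := hRA.left_inv ⟨(Ainvsqrt.comp Ainvsqrt) v, hAinv.mem v⟩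
    rw [hzero] at this
    simpa using this.symm
  have hv0 : v = 0 := by rw [hveq, hW0, smul_zero]
  exact sub_eq_zero.mp hv0

/-- **Resolvents of `±i√A` on a left half-plane (Section 4, eq. before (4.3)).**
Let `A ∈ 𝒬(c²)` and let `√A` be the square root of `A` (the unbounded inverse of the
bounded operator `A^{-1/2}`).  Then for every `z` with `Re(z) ≤ -c` the operators
`±i√A + z` are boundedly invertible, with
`(±i√A + z)⁻¹ = z(A+z²)⁻¹ ∓ i √A (A+z²)⁻¹` and
`(±i√A + z)⁻¹ A^{-1/2} = z(A+z²)⁻¹ A^{-1/2} ∓ i (A+z²)⁻¹`; moreover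
`‖(±i√A + z)⁻¹ A^{-1/2}‖ = o(1)` as `|z| → ∞` in `{Re(z) ≤ -c}`. -/
theorem sqrt_resolvents_of_QClass
    [CompleteSpace E]
    (c : ℝ) (hc : 0 < c)
    (A sqrtA : E →ₗ.[ℂ] E) (RQ : ℂ → E →L[ℂ] E) (Ainvsqrt : E →L[ℂ] E)
    (hQ : IsQClass A (c ^ 2) RQ Ainvsqrt)
    (hAinv : IsResolventAt A 0 (Ainvsqrt.comp Ainvsqrt))
    (hsqrtA : IsResolventAt sqrtA 0 Ainvsqrt)
    (hcomm : ∀ z ∈ ParabolicRegion (c ^ 2), Commute Ainvsqrt (RQ z)) :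
    ∃ Rp Rm : ℂ → E →L[ℂ] E,
      (∀ z : ℂ, z.re ≤ -c →
        IsResolventAt ((I : ℂ) • sqrtA) z (Rp z) ∧
        IsResolventAt ((-I : ℂ) • sqrtA) z (Rm z) ∧
        (∀ y : E, ∃ h : RQ (z ^ 2) y ∈ sqrtA.domain,
          Rp z y = z • RQ (z ^ 2) y - I • sqrtA ⟨RQ (z ^ 2) y, h⟩ ∧
          Rm z y = z • RQ (z ^ 2) y + I • sqrtA ⟨RQ (z ^ 2) y, h⟩) ∧
        (∀ y : E,
          Rp z (Ainvsqrt y) = z • RQ (z ^ 2) (Ainvsqrt y) - I • RQ (z ^ 2) y ∧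
          Rm z (Ainvsqrt y) = z • RQ (z ^ 2) (Ainvsqrt y) + I • RQ (z ^ 2) y)) ∧
      (∀ ε > (0 : ℝ), ∃ M : ℝ, ∀ z : ℂ, z.re ≤ -c → M ≤ ‖z‖ →
        ‖(Rp z).comp Ainvsqrt‖ ≤ ε ∧ ‖(Rm z).comp Ainvsqrt‖ ≤ ε) := by
  set B : ℂ → E →L[ℂ] E :=
    fun z => Ainvsqrt - (z ^ 2) • Ainvsqrt.comp (RQ (z ^ 2)) with hBdef
  refine ⟨fun z => z • RQ (z ^ 2) - I • B z, fun z => z • RQ (z ^ 2) - (-I) • B z, ?_, ?_⟩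
  · intro z hz
    have hz0 : z ≠ 0 := by
      intro h
      rw [h] at hz
      simp only [Complex.zero_re] at hz
      linarith
    have hRA : IsResolventAt A (z ^ 2) (RQ (z ^ 2)) :=
      hQ.para (z ^ 2) (SqrtRes.mem_parab_sq hc hz)
    have hcm : ∀ w, Ainvsqrt (RQ (z ^ 2) w) = RQ (z ^ 2) (Ainvsqrt w) := by
      intro w
      have h := hcomm (z ^ 2) (SqrtRes.mem_parab_sq hc hz)
      have := DFunLike.congr_fun h w
      simpa [ContinuousLinearMap.mul_apply] using this
    have hBapp : ∀ y, B z y = Ainvsqrt (y - z ^ 2 • RQ (z ^ 2) y) := by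
      intro y; simp [hBdef, map_sub, _root_.map_smul, sub_eq_add_neg]
    have hBAinv : ∀ y, B z (Ainvsqrt y) = RQ (z ^ 2) y := by
      intro y
      obtain ⟨h', hval'⟩ := SqrtRes.key_inv hRA hAinv hsqrtA (Ainvsqrt y)
      have e1 : B z (Ainvsqrt y) = sqrtA ⟨RQ (z ^ 2) (Ainvsqrt y), h'⟩ := by
        rw [hval', hBapp]
      have e3 : (⟨RQ (z ^ 2) (Ainvsqrt y), h'⟩ : sqrtA.domain)
          = ⟨Ainvsqrt (RQ (z ^ 2) y), hsqrtA.mem _⟩ := Subtype.ext (hcm y).symm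
      rw [e1, e3, SqrtRes.sqrtA_apply_Ainvsqrt hsqrtA]
    refine ⟨SqrtRes.aux_resolvent I z Complex.I_mul_I hz0 hRA hAinv hsqrtA,
      SqrtRes.aux_resolvent (-I) z (by rw [neg_mul_neg, Complex.I_mul_I]) hz0 hRA hAinv hsqrtA,
      ?_, ?_⟩
    · intro y
      obtain ⟨h, hval⟩ := SqrtRes.key_inv hRA hAinv hsqrtA y
      refine ⟨h, ?_, ?_⟩
      · rw [show sqrtA ⟨RQ (z ^ 2) y, h⟩ = B z y from by rw [hval, hBapp]]
        simp
      · rw [show sqrtA ⟨RQ (z ^ 2) y, h⟩ = B z y from by rw [hval, hBapp]]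
        simp [sub_eq_add_neg]
    · intro y
      constructor
      · simp [hBAinv y]
      · simp [hBAinv y, sub_eq_add_neg]
  · intro ε hε
    obtain ⟨M₁, hM₁⟩ := hQ.sqrt_res_decay (ε / 2) (by linarith)
    obtain ⟨M₂, hM₂⟩ := hQ.res_decay (ε / 2) (by linarith)
    refine ⟨max 1 (max M₁ M₂), fun z hz hM => ?_⟩
    have h1 : (1 : ℝ) ≤ ‖z‖ := le_trans (le_max_left _ _) hM
    have hp : z ^ 2 ∈ ParabolicRegion (c ^ 2) := SqrtRes.mem_parab_sq hc hz
    have hzsq : ‖z ^ 2‖ = ‖z‖ ^ 2 := by rw [norm_pow]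
    have hzz : ‖z‖ ≤ ‖z ^ 2‖ := by rw [hzsq]; nlinarith
    have hge1 : M₁ ≤ ‖z ^ 2‖ :=
      le_trans (le_trans (le_max_left _ _) (le_trans (le_max_right _ _) hM)) hzz
    have hge2 : M₂ ≤ ‖z ^ 2‖ :=
      le_trans (le_trans (le_max_right _ _) (le_trans (le_max_right _ _) hM)) hzz
    have t1 := hM₁ (z ^ 2) hp hge1
    have t2 := hM₂ (z ^ 2) hp hge2
    have hpow : ‖z ^ 2‖ ^ ((1 : ℝ) / 2) = ‖z‖ := by
      rw [hzsq, ← Real.rpow_natCast ‖z‖ 2, ← Real.rpow_mul (norm_nonneg z)]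
      norm_num
    have hz0 : z ≠ 0 := by
      intro h
      rw [h] at hz
      simp only [Complex.zero_re] at hz
      linarith
    have hRA : IsResolventAt A (z ^ 2) (RQ (z ^ 2)) := hQ.para (z ^ 2) hp
    have hcm : ∀ w, Ainvsqrt (RQ (z ^ 2) w) = RQ (z ^ 2) (Ainvsqrt w) := by
      intro w
      have h := hcomm (z ^ 2) hp
      have := DFunLike.congr_fun h w
      simpa [ContinuousLinearMap.mul_apply] using this
    have hBapp : ∀ y, B z y = Ainvsqrt (y - z ^ 2 • RQ (z ^ 2) y) := by
      intro y; simp [hBdef, map_sub, _root_.map_smul, sub_eq_add_neg]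
    have hBAinv : (B z).comp Ainvsqrt = RQ (z ^ 2) := by
      ext y
      obtain ⟨h', hval'⟩ := SqrtRes.key_inv hRA hAinv hsqrtA (Ainvsqrt y)
      have e1 : B z (Ainvsqrt y) = sqrtA ⟨RQ (z ^ 2) (Ainvsqrt y), h'⟩ := by
        rw [hval', hBapp]
      have e3 : (⟨RQ (z ^ 2) (Ainvsqrt y), h'⟩ : sqrtA.domain)
          = ⟨Ainvsqrt (RQ (z ^ 2) y), hsqrtA.mem _⟩ := Subtype.ext (hcm y).symm
      show B z (Ainvsqrt y) = RQ (z ^ 2) y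
      rw [e1, e3, SqrtRes.sqrtA_apply_Ainvsqrt hsqrtA]
    have hbound : ∀ σ : ℂ, ‖σ‖ = 1 →
        ‖((z • RQ (z ^ 2) - σ • B z).comp Ainvsqrt)‖ ≤ ε := by
      intro σ hσn
      have heq : (z • RQ (z ^ 2) - σ • B z).comp Ainvsqrt
          = z • ((RQ (z ^ 2)).comp Ainvsqrt) - σ • RQ (z ^ 2) := by
        rw [ContinuousLinearMap.sub_comp, ContinuousLinearMap.smul_comp,
          ContinuousLinearMap.smul_comp, hBAinv]
      calc ‖(z • RQ (z ^ 2) - σ • B z).comp Ainvsqrt‖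
          = ‖z • ((RQ (z ^ 2)).comp Ainvsqrt) - σ • RQ (z ^ 2)‖ := by rw [heq]
        _ ≤ ‖z • ((RQ (z ^ 2)).comp Ainvsqrt)‖ + ‖σ • RQ (z ^ 2)‖ := norm_sub_le _ _
        _ ≤ ‖z‖ * ‖(RQ (z ^ 2)).comp Ainvsqrt‖ + ‖σ‖ * ‖RQ (z ^ 2)‖ :=
            add_le_add (ContinuousLinearMap.opNorm_smul_le _ _)
              (ContinuousLinearMap.opNorm_smul_le _ _)
        _ = ‖z‖ * ‖(RQ (z ^ 2)).comp Ainvsqrt‖ + ‖RQ (z ^ 2)‖ := by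
            rw [hσn, one_mul]
        _ ≤ ε / 2 + ε / 2 := add_le_add (by rw [← hpow]; exact t1) t2
        _ = ε := by ring
    exact ⟨hbound I Complex.norm_I, hbound (-I) (by rw [norm_neg, Complex.norm_I])⟩

end
end
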